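/- Knight's identity: for all real numbers u and v, ρ_τ(u−v) − ρ_τ(u) = −v·ψ_τ(u) + ∫₀^v [𝟙(u ≤ s) − 𝟙(u ≤ 0)] ds, where ρ_τ(a) = a(τ − 𝟙(a ≤ 0)) and ψ_τ(u) = τ − 𝟙(u ≤ 0). -/

import Mathlib

/-!
Writing the check function as `ρ_τ(a) = τ a + (-a)⁺` and using that `s ↦ (s - u)⁺` is a primitive
of `𝟙(u ≤ s)`, both sides reduce to `-τ v + (v - u)⁺ - (-u)⁺`.
-/

open intervalIntegral Set

theorem mul_sub_ite_nonpos_eq {α : Type*} [CommRing α] [LinearOrder α] [IsOrderedRing α] (τ a : α) :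
    a * (τ - if a ≤ 0 then 1 else 0) = τ * a + max (-a) 0 := by
  split_ifs with ha
  · rw [max_eq_left (neg_nonneg.mpr ha)]; ring
  · rw [max_eq_right (neg_nonpos.mpr (le_of_not_ge ha))]; ring

theorem monotone_ite_le_one_zero (c : ℝ) : Monotone fun s : ℝ => if c ≤ s then (1 : ℝ) else 0 := by
  intro a b hab
  dsimp only
  split_ifs with ha hb hb
  exacts [le_rfl, absurd (ha.trans hab) hb, zero_le_one, le_rfl]

theorem hasDerivWithinAt_max_sub_zero_Ioi (c x : ℝ) :
    HasDerivWithinAt (fun s => max (s - c) 0) (if c ≤ x then 1 else 0) (Ioi x) x := by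
  split_ifs with hx
  · refine ((hasDerivWithinAt_id x _).sub_const c).congr (fun s hs => ?_) ?_
    · exact max_eq_left (sub_nonneg.mpr (hx.trans (le_of_lt hs)))
    · exact max_eq_left (sub_nonneg.mpr hx)
  · have hzero : (fun s => max (s - c) 0) =ᶠ[nhds x] fun _ => (0 : ℝ) :=
      (eventually_lt_nhds (lt_of_not_ge hx)).mono fun s hs => max_eq_right (sub_nonpos.mpr hs.le)
    exact ((hasDerivAt_const x (0 : ℝ)).congr_of_eventuallyEq hzero).hasDerivWithinAt

theorem integral_ite_le_one_zero (c a b : ℝ) :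
    ∫ s in a..b, (if c ≤ s then (1 : ℝ) else 0) = max (b - c) 0 - max (a - c) 0 :=
  integral_eq_sub_of_hasDeriv_right
    ((continuous_sub_right c).max continuous_const).continuousOn
    (fun x _ => hasDerivWithinAt_max_sub_zero_Ioi c x)
    (monotone_ite_le_one_zero c).intervalIntegrable

theorem knight_identity_general (τ : ℝ) (u v : ℝ) :
    (u - v) * (τ - (if u - v ≤ 0 then (1:ℝ) else 0)) - u * (τ - (if u ≤ 0 then (1:ℝ) else 0))
      = -v * (τ - (if u ≤ 0 then (1:ℝ) else 0))
        + ∫ s in (0:ℝ)..v, ((if u ≤ s then (1:ℝ) else 0) - (if u ≤ 0 then (1:ℝ) else 0)) := by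
  rw [integral_sub (monotone_ite_le_one_zero u).intervalIntegrable intervalIntegrable_const,
    integral_const, integral_ite_le_one_zero, mul_sub_ite_nonpos_eq, mul_sub_ite_nonpos_eq,
    smul_eq_mul, neg_sub, zero_sub]
  ring

/-- Knight's identity: ρ_τ(u−v) − ρ_τ(u) = −v·ψ_τ(u) + ∫₀^v [𝟙(u ≤ s) − 𝟙(u ≤ 0)] ds. -/
theorem knight_identity (τ : ℝ) (hτ : τ ∈ Set.Ioo (0:ℝ) 1) (u v : ℝ) :
    (u - v) * (τ - (if u - v ≤ 0 then (1:ℝ) else 0)) - u * (τ - (if u ≤ 0 then (1:ℝ) else 0))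
      = -v * (τ - (if u ≤ 0 then (1:ℝ) else 0))
        + ∫ s in (0:ℝ)..v, ((if u ≤ s then (1:ℝ) else 0) - (if u ≤ 0 then (1:ℝ) else 0)) :=
  knight_identity_general τ u v
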